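/- There exists a universal constant C such that for every δ ∈ (0, arsinh(1)) and every ℓ ∈ (0, 2δ], the quantities X(ℓ) and X_δ(ℓ) satisfy π/δ − C ≤ X(ℓ) − X_δ(ℓ) ≤ π²/(2δ), where X_δ(ℓ) = (2π/ℓ)(π/2 − arcsin(sinh(ℓ/2)/sinh(δ))). -/
import Mathlib


open Real

/-- Half-length of the hyperbolic collar in collar coordinates. -/
noncomputable def Xcol (ℓ : ℝ) : ℝ :=
  (2 * π / ℓ) * (π / 2 - Real.arctan (Real.sinh (ℓ / 2)))

/-- Half-length of the `δ`-thin part of the collar in collar coordinates: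
`X_δ(ℓ) = (2π/ℓ)(π/2 − arcsin(sinh(ℓ/2)/sinh δ))` for `δ ≥ ℓ/2`, and `0` otherwise. -/
noncomputable def Xdel (δ ℓ : ℝ) : ℝ :=
  if ℓ / 2 ≤ δ then (2 * π / ℓ) * (π / 2 - Real.arcsin (Real.sinh (ℓ / 2) / Real.sinh δ))
  else 0

/-- `sinh` is convex on `[0, ∞)`. -/
lemma sinh_convexOn_aux : ConvexOn ℝ (Set.Ici (0:ℝ)) Real.sinh := by
  refine convexOn_of_deriv2_nonneg (convex_Ici 0) Real.continuous_sinh.continuousOn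
    Real.differentiable_sinh.differentiableOn
    (by rw [Real.deriv_sinh]; exact Real.differentiable_cosh.differentiableOn)
    (fun x hx => ?_)
  have h2 : deriv^[2] Real.sinh = Real.sinh := by
    have : deriv^[2] Real.sinh = deriv (deriv Real.sinh) := rfl
    rw [this, Real.deriv_sinh, Real.deriv_cosh]
  rw [h2]
  rw [interior_Ici] at hx
  exact (Real.sinh_pos_iff.mpr hx).le

/-- Chord inequality for `sinh` : `δ sinh t ≤ t sinh δ` for `0 ≤ t ≤ δ`. -/
lemma sinh_mul_le_aux {t δ : ℝ} (ht : 0 ≤ t) (htδ : t ≤ δ) (hδ : 0 < δ) :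
    δ * Real.sinh t ≤ t * Real.sinh δ := by
  have hb : 0 ≤ t / δ := div_nonneg ht hδ.le
  have hb1 : t / δ ≤ 1 := (div_le_one hδ).mpr htδ
  have ha : 0 ≤ 1 - t / δ := by linarith
  have h := sinh_convexOn_aux.2 (Set.self_mem_Ici (a := (0:ℝ)))
    (Set.mem_Ici.mpr hδ.le) ha hb (by ring)
  simp only [smul_eq_mul, mul_zero, zero_add, Real.sinh_zero] at h
  rw [div_mul_cancel₀ _ hδ.ne'] at h
  have h' := mul_le_mul_of_nonneg_left h hδ.le
  calc δ * Real.sinh t ≤ δ * (t / δ * Real.sinh δ) := h'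
    _ = t * Real.sinh δ := by field_simp

/-- Quadratic upper bound for `sinh` on `[0,1]`. -/
lemma sinh_le_quadratic_aux {x : ℝ} (h0 : 0 ≤ x) (h1 : x ≤ 1) :
    Real.sinh x ≤ x + x ^ 2 / 2 := by
  have hexp := Real.exp_bound' h0 h1 (n := 3) (by norm_num)
  have hsum : ∑ m ∈ Finset.range 3, x ^ m / m.factorial = 1 + x + x ^ 2 / 2 := by
    simp [Finset.sum_range_succ, Nat.factorial]
  rw [hsum] at hexp
  norm_num [Nat.factorial] at hexp
  have hneg : 1 - x ≤ Real.exp (-x) := by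
    have := Real.add_one_le_exp (-x); linarith
  have hx3 : x ^ 3 ≤ x ^ 2 := pow_le_pow_of_le_one h0 h1 (by norm_num)
  rw [Real.sinh_eq]
  nlinarith

/-- There exists a universal constant `C` such that for every `δ ∈ (0, arsinh 1)` and every
`ℓ ∈ (0, 2δ]`, one has `π/δ − C ≤ X(ℓ) − X_δ(ℓ) ≤ π²/(2δ)`. -/
theorem collar_thin_part_length_estimate :
    ∃ C : ℝ, ∀ δ ℓ : ℝ, 0 < δ → δ < Real.arsinh 1 → 0 < ℓ → ℓ ≤ 2 * δ →
      π / δ - C ≤ Xcol ℓ - Xdel δ ℓ ∧ Xcol ℓ - Xdel δ ℓ ≤ π ^ 2 / (2 * δ) := by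
  refine ⟨2 * π, fun δ ℓ hδ hδ1 hℓ hℓδ => ?_⟩
  have hπ := Real.pi_pos
  have ht : 0 < ℓ / 2 := by linarith
  have htδ : ℓ / 2 ≤ δ := by linarith
  have harsinh : Real.arsinh 1 < 1 := by
    have h1 : (1:ℝ) < Real.sinh 1 := Real.self_lt_sinh_iff.mpr one_pos
    calc Real.arsinh 1 < Real.arsinh (Real.sinh 1) := Real.arsinh_lt_arsinh.mpr h1
      _ = 1 := Real.arsinh_sinh 1
  have hδ1' : δ < 1 := hδ1.trans harsinh
  have hS1 : Real.sinh δ < 1 := by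
    have := Real.sinh_lt_sinh.mpr hδ1
    rwa [Real.sinh_arsinh] at this
  have hSpos : 0 < Real.sinh δ := Real.sinh_pos_iff.mpr hδ
  have hδS : δ < Real.sinh δ := Real.self_lt_sinh_iff.mpr hδ
  have hspos : 0 < Real.sinh (ℓ / 2) := Real.sinh_pos_iff.mpr ht
  have hts : ℓ / 2 < Real.sinh (ℓ / 2) := Real.self_lt_sinh_iff.mpr ht
  have hsS : Real.sinh (ℓ / 2) ≤ Real.sinh δ := Real.sinh_le_sinh.mpr htδ
  set x : ℝ := Real.sinh (ℓ / 2) / Real.sinh δ with hxdef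
  have hx0 : 0 ≤ x := div_nonneg hspos.le hSpos.le
  have hx1 : x ≤ 1 := (div_le_one hSpos).mpr hsS
  have hXdel : Xdel δ ℓ = (2 * π / ℓ) * (π / 2 - Real.arcsin x) := if_pos htδ
  have hdiff : Xcol ℓ - Xdel δ ℓ
      = (2 * π / ℓ) * (Real.arcsin x - Real.arctan (Real.sinh (ℓ / 2))) := by
    rw [Xcol, hXdel]; ring
  set A : ℝ := Real.arcsin x with hAdef
  set B : ℝ := Real.arctan (Real.sinh (ℓ / 2)) with hBdef
  have hA0 : 0 ≤ A := Real.arcsin_nonneg.mpr hx0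
  have hsinA : Real.sin A = x := Real.sin_arcsin (by linarith) hx1
  -- A ≤ (π/2) x
  have hA_le : A ≤ π / 2 * x := by
    have h := Real.mul_le_sin hA0 (Real.arcsin_le_pi_div_two x)
    rw [hsinA] at h
    have h2 := mul_le_mul_of_nonneg_left h (by positivity : (0:ℝ) ≤ π / 2)
    calc A = π / 2 * (2 / π * A) := by field_simp
      _ ≤ π / 2 * x := h2
  -- x ≤ A
  have hA_ge : x ≤ A := by
    have := Real.sin_le hA0
    rw [hsinA] at this; exact this
  -- x ≤ t/δ
  have hx_le : x ≤ (ℓ / 2) / δ := by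
    rw [hxdef, div_le_div_iff₀ hSpos hδ]
    have := sinh_mul_le_aux ht.le htδ hδ
    nlinarith
  -- 0 < B ≤ sinh t
  have hBpos : 0 < B := by
    have := Real.arctan_strictMono hspos
    rwa [Real.arctan_zero] at this
  have hB_le : B ≤ Real.sinh (ℓ / 2) := by
    have h := Real.lt_tan hBpos (Real.arctan_lt_pi_div_two _)
    rw [Real.tan_arctan] at h
    exact h.le
  have hC : 0 < 2 * π / ℓ := by positivity
  constructor
  · -- lower bound
    -- A - B ≥ x - sinh t = sinh t (1 - S)/S ≥ t (1-S)/S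
    have key : (ℓ / 2) * (1 - Real.sinh δ) / Real.sinh δ ≤ A - B := by
      have h1 : x - Real.sinh (ℓ / 2)
          = Real.sinh (ℓ / 2) * (1 - Real.sinh δ) / Real.sinh δ := by
        rw [hxdef]
        field_simp
      have h2 : (ℓ / 2) * (1 - Real.sinh δ) / Real.sinh δ
          ≤ Real.sinh (ℓ / 2) * (1 - Real.sinh δ) / Real.sinh δ := by
        have h1S : (0:ℝ) ≤ 1 - Real.sinh δ := by linarith
        gcongr
      calc (ℓ / 2) * (1 - Real.sinh δ) / Real.sinh δ
          ≤ Real.sinh (ℓ / 2) * (1 - Real.sinh δ) / Real.sinh δ := h2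
        _ = x - Real.sinh (ℓ / 2) := h1.symm
        _ ≤ A - B := by linarith
    have hmul := mul_le_mul_of_nonneg_left key hC.le
    have heq : (2 * π / ℓ) * ((ℓ / 2) * (1 - Real.sinh δ) / Real.sinh δ)
        = π / Real.sinh δ - π := by
      field_simp
    rw [hdiff]
    rw [heq] at hmul
    -- π/S - π ≥ π/δ - 2π  ⟸  1/δ - 1/S ≤ 1 ⟸ S - δ ≤ δ S
    have hquad : Real.sinh δ ≤ δ + δ ^ 2 / 2 := sinh_le_quadratic_aux hδ.le hδ1'.le
    have hSδ : Real.sinh δ - δ ≤ δ * Real.sinh δ := by nlinarith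
    have hinv : π / δ - π / Real.sinh δ ≤ π := by
      rw [div_sub_div _ _ hδ.ne' hSpos.ne']
      rw [div_le_iff₀ (by positivity)]
      nlinarith
    linarith
  · -- upper bound
    have key : A - B ≤ π / 2 * ((ℓ / 2) / δ) := by
      have : A ≤ π / 2 * ((ℓ / 2) / δ) := by
        calc A ≤ π / 2 * x := hA_le
          _ ≤ π / 2 * ((ℓ / 2) / δ) :=
            mul_le_mul_of_nonneg_left hx_le (by positivity)
      linarith
    have hmul := mul_le_mul_of_nonneg_left key hC.le
    have heq : (2 * π / ℓ) * (π / 2 * ((ℓ / 2) / δ)) = π ^ 2 / (2 * δ) := by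
      field_simp
    rw [hdiff]
    rw [heq] at hmul
    exact hmul
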